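/- Let A, M, F be n×n real matrices, ε ∈ (0, 1/2), and suppose for each column k: ‖A m_k − e_k‖₂ ≤ ε and ‖f_k‖₁ ≤ ε/‖A‖₁, where m_k, f_k are the k-th columns of M and F. If additionally each residual column A(m_k − f_k) − e_k has at most p_d nonzero entries and 2√(p_d) ε < 1, then ‖A(M − F) − I‖₁ ≤ 2√(p_d) ε < 1 and, assuming A is invertible, M − F is nonsingular with ‖(M − F) − A⁻¹‖₁/‖A⁻¹‖₁ ≤ 2√(p_d) ε. -/

import Mathlib

/-- The ℓ¹ norm on `ℝⁿ`. -/
def l1norm {n : ℕ} (x : Fin n → ℝ) : ℝ := ∑ i, |x i|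

/-- The Euclidean (ℓ²) norm on `ℝⁿ`. -/
noncomputable def l2norm {n : ℕ} (x : Fin n → ℝ) : ℝ := Real.sqrt (∑ i, (x i) ^ 2)

/-- The induced matrix 1-norm: the maximum absolute column sum. -/
def mat1norm {n : ℕ} [NeZero n] (A : Matrix (Fin n) (Fin n) ℝ) : ℝ :=
  Finset.univ.sup' Finset.univ_nonempty fun j => ∑ i, |A i j|

/-!
Write `E = A(M - F) - I`. Its `k`-th column is `r = (A m_k - e_k) - A f_k`, which has at most
`p_d` nonzero entries, so `‖r‖₁ ≤ √p_d ‖r‖₂` by Cauchy–Schwarz on its support, while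
`‖r‖₂ ≤ ‖A m_k - e_k‖₂ + ‖A f_k‖₁ ≤ ε + ‖A‖₁ ‖f_k‖₁ ≤ 2ε`. Hence `‖E‖₁ ≤ 2√p_d ε < 1`, so
`(M - F) v = 0` would give `E v = -v` with `‖E v‖₁ < ‖v‖₁` unless `v = 0`; and
`(M - F) - A⁻¹ = A⁻¹ E` yields the relative error bound by submultiplicativity.
-/

open Finset Matrix

variable {n : ℕ}

lemma l1norm_nonneg (x : Fin n → ℝ) : 0 ≤ l1norm x :=
  sum_nonneg fun _ _ => abs_nonneg _

lemma l1norm_neg (x : Fin n → ℝ) : l1norm (-x) = l1norm x := by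
  simp [l1norm]

lemma l2norm_le_l1norm (x : Fin n → ℝ) : l2norm x ≤ l1norm x := by
  rw [l2norm, Real.sqrt_le_left (l1norm_nonneg x), l1norm]
  simpa only [sq_abs] using sum_sq_le_sq_sum_of_nonneg (s := univ) (fun i _ => abs_nonneg (x i))

lemma l1norm_le_sqrt_mul_l2norm_of_card_support_le {x : Fin n → ℝ} {p : ℕ}
    (hx : #{i | x i ≠ 0} ≤ p) : l1norm x ≤ √p * l2norm x := by
  have hsupp : ∑ i with x i ≠ 0, |x i| = l1norm x :=
    sum_filter_of_ne fun i _ hi => abs_ne_zero.mp hi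
  rw [l2norm, ← Real.sqrt_mul (Nat.cast_nonneg p), Real.le_sqrt (l1norm_nonneg x)
    (by positivity), ← hsupp]
  calc (∑ i with x i ≠ 0, |x i|) ^ 2
      ≤ #{i | x i ≠ 0} * ∑ i with x i ≠ 0, |x i| ^ 2 := sq_sum_le_card_mul_sum_sq
    _ ≤ p * ∑ i, x i ^ 2 := by
      simp only [sq_abs]
      gcongr
      exact subset_univ _

lemma l1norm_pos {x : Fin n → ℝ} (hx : x ≠ 0) : 0 < l1norm x := by
  obtain ⟨i, hi⟩ := Function.ne_iff.mp hx
  exact (abs_pos.mpr hi).trans_le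
    (single_le_sum (f := fun i => |x i|) (fun i _ => abs_nonneg (x i)) (mem_univ i))

lemma l2norm_eq_norm (x : Fin n → ℝ) :
    l2norm x = ‖(WithLp.toLp 2 x : EuclideanSpace ℝ (Fin n))‖ := by
  simp [l2norm, EuclideanSpace.norm_eq]

lemma l2norm_sub_le (x y : Fin n → ℝ) : l2norm (x - y) ≤ l2norm x + l2norm y := by
  simpa only [l2norm_eq_norm, WithLp.toLp_sub] using norm_sub_le _ _

section MatrixOneNorm

variable [NeZero n]

lemma l1norm_col_le_mat1norm (A : Matrix (Fin n) (Fin n) ℝ) (j : Fin n) :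
    l1norm (fun i => A i j) ≤ mat1norm A :=
  le_sup' (fun j => ∑ i, |A i j|) (mem_univ j)

lemma mat1norm_le_iff {A : Matrix (Fin n) (Fin n) ℝ} {c : ℝ} :
    mat1norm A ≤ c ↔ ∀ j, l1norm (fun i => A i j) ≤ c := by
  simp [mat1norm, sup'_le_iff, l1norm]

lemma mat1norm_nonneg (A : Matrix (Fin n) (Fin n) ℝ) : 0 ≤ mat1norm A :=
  (l1norm_nonneg _).trans (l1norm_col_le_mat1norm A 0)

lemma l1norm_mulVec_le (A : Matrix (Fin n) (Fin n) ℝ) (x : Fin n → ℝ) :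
    l1norm (A *ᵥ x) ≤ mat1norm A * l1norm x := by
  calc l1norm (A *ᵥ x) ≤ ∑ i, ∑ j, |A i j * x j| :=
        sum_le_sum fun i _ => abs_sum_le_sum_abs (fun j => A i j * x j) univ
    _ = ∑ j, l1norm (fun i => A i j) * |x j| := by
        rw [sum_comm]
        simp only [abs_mul, l1norm, sum_mul]
    _ ≤ ∑ j, mat1norm A * |x j| := by gcongr with j; exact l1norm_col_le_mat1norm A j
    _ = mat1norm A * l1norm x := (mul_sum _ _ _).symm

lemma mat1norm_mul_le (A B : Matrix (Fin n) (Fin n) ℝ) :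
    mat1norm (A * B) ≤ mat1norm A * mat1norm B := by
  refine mat1norm_le_iff.mpr fun j => ?_
  have hcol : (fun i => (A * B) i j) = A *ᵥ fun i => B i j := by
    ext i; simp [mul_apply, mulVec, dotProduct]
  rw [hcol]
  exact (l1norm_mulVec_le A _).trans
    (mul_le_mul_of_nonneg_left (l1norm_col_le_mat1norm B j) (mat1norm_nonneg A))

lemma isUnit_of_mat1norm_mul_sub_one_lt_one {A B : Matrix (Fin n) (Fin n) ℝ}
    (h : mat1norm (A * B - 1) < 1) : IsUnit B := by
  rw [isUnit_iff_isUnit_det, isUnit_iff_ne_zero]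
  intro hdet
  obtain ⟨v, hv0, hBv⟩ := exists_mulVec_eq_zero_iff.mpr hdet
  have hEv : (A * B - 1) *ᵥ v = -v := by
    rw [sub_mulVec, ← mulVec_mulVec, hBv, mulVec_zero, one_mulVec, zero_sub]
  have hle := l1norm_mulVec_le (A * B - 1) v
  rw [hEv, l1norm_neg] at hle
  nlinarith [l1norm_pos hv0]

lemma mat1norm_sub_inv_le {A : Matrix (Fin n) (Fin n) ℝ} (hA : IsUnit A)
    (B : Matrix (Fin n) (Fin n) ℝ) :
    mat1norm (B - A⁻¹) ≤ mat1norm A⁻¹ * mat1norm (A * B - 1) := by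
  have hinv : A⁻¹ * A = 1 := nonsing_inv_mul A ((isUnit_iff_isUnit_det A).mp hA)
  rw [show B - A⁻¹ = A⁻¹ * (A * B - 1) by rw [mul_sub, ← mul_assoc, hinv, one_mul, mul_one]]
  exact mat1norm_mul_le _ _

end MatrixOneNorm

lemma col_mul_sub_one (A B : Matrix (Fin n) (Fin n) ℝ) (k : Fin n) :
    (fun i => (A * B - 1) i k) = A *ᵥ (fun i => B i k) - Pi.single k 1 := by
  ext i
  simp [mul_apply, mulVec, dotProduct, one_apply, Pi.single_apply, eq_comm]

lemma l1norm_sparse_residual_le [NeZero n] {A : Matrix (Fin n) (Fin n) ℝ} (hA : 0 < mat1norm A)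
    {m f b : Fin n → ℝ} {ε : ℝ} {p : ℕ} (hm : l2norm (A *ᵥ m - b) ≤ ε)
    (hf : l1norm f ≤ ε / mat1norm A) (hsparse : #{j | (A *ᵥ (m - f) - b) j ≠ 0} ≤ p) :
    l1norm (A *ᵥ (m - f) - b) ≤ 2 * √p * ε := by
  have hAf : l2norm (A *ᵥ f) ≤ ε :=
    calc l2norm (A *ᵥ f) ≤ l1norm (A *ᵥ f) := l2norm_le_l1norm _
      _ ≤ mat1norm A * l1norm f := l1norm_mulVec_le A f
      _ ≤ mat1norm A * (ε / mat1norm A) := by gcongr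
      _ = ε := mul_div_cancel₀ ε hA.ne'
  have hr : l2norm (A *ᵥ (m - f) - b) ≤ 2 * ε := by
    rw [mulVec_sub, sub_right_comm]
    linarith [l2norm_sub_le (A *ᵥ m - b) (A *ᵥ f)]
  calc l1norm (A *ᵥ (m - f) - b) ≤ √p * l2norm (A *ᵥ (m - f) - b) :=
        l1norm_le_sqrt_mul_l2norm_of_card_support_le hsparse
    _ ≤ √p * (2 * ε) := by gcongr
    _ = 2 * √p * ε := by ring

theorem stmt13_general {n : ℕ} [NeZero n] (A M F : Matrix (Fin n) (Fin n) ℝ)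
    (hA : 0 < mat1norm A) (hAinv : IsUnit A)
    (ε : ℝ)
    (pd : ℕ)
    (hm : ∀ k : Fin n,
      l2norm (A.mulVec (fun i => M i k) - Pi.single k 1) ≤ ε)
    (hf : ∀ k : Fin n, l1norm (fun i => F i k) ≤ ε / mat1norm A)
    (hnnz : ∀ k : Fin n,
      (Finset.univ.filter
        (fun j => ((A.mulVec (fun i => (M - F) i k) - Pi.single k 1 : Fin n → ℝ)) j ≠ 0)).card ≤ pd)
    (hsmall : 2 * Real.sqrt pd * ε < 1) :
    mat1norm (A * (M - F) - 1) ≤ 2 * Real.sqrt pd * ε ∧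
      IsUnit (M - F) ∧
      mat1norm ((M - F) - A⁻¹) / mat1norm A⁻¹ ≤ 2 * Real.sqrt pd * ε := by
  have hE : mat1norm (A * (M - F) - 1) ≤ 2 * √pd * ε := by
    refine mat1norm_le_iff.mpr fun k => ?_
    rw [col_mul_sub_one]
    exact l1norm_sparse_residual_le hA (hm k) (hf k) (hnnz k)
  refine ⟨hE, isUnit_of_mat1norm_mul_sub_one_lt_one (hE.trans_lt hsmall), ?_⟩
  refine div_le_of_le_mul₀ (mat1norm_nonneg _) ((mat1norm_nonneg _).trans hE) ?_
  calc mat1norm ((M - F) - A⁻¹) ≤ mat1norm A⁻¹ * mat1norm (A * (M - F) - 1) :=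
        mat1norm_sub_inv_le hAinv _
    _ ≤ 2 * √pd * ε * mat1norm A⁻¹ := by
        rw [mul_comm]; exact mul_le_mul_of_nonneg_right hE (mat1norm_nonneg _)

/-- Combined result: column-wise accuracy of `M` plus the dropping bound
`‖f_k‖₁ ≤ ε/‖A‖₁` and a sparsity bound `p_d` on the residual columns of
`M − F` give `‖A(M − F) − I‖₁ ≤ 2√p_d ε`, nonsingularity of `M − F` and the
relative error bound `‖(M − F) − A⁻¹‖₁/‖A⁻¹‖₁ ≤ 2√p_d ε`. -/
theorem stmt13 {n : ℕ} [NeZero n] (A M F : Matrix (Fin n) (Fin n) ℝ)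
    (hA : 0 < mat1norm A) (hAinv : IsUnit A)
    (ε : ℝ) (hε0 : 0 < ε) (hε1 : ε < 1 / 2)
    (pd : ℕ) (hpd : 0 < pd)
    (hm : ∀ k : Fin n,
      l2norm (A.mulVec (fun i => M i k) - Pi.single k 1) ≤ ε)
    (hf : ∀ k : Fin n, l1norm (fun i => F i k) ≤ ε / mat1norm A)
    (hnnz : ∀ k : Fin n,
      (Finset.univ.filter
        (fun j => ((A.mulVec (fun i => (M - F) i k) - Pi.single k 1 : Fin n → ℝ)) j ≠ 0)).card ≤ pd)
    (hsmall : 2 * Real.sqrt pd * ε < 1) :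
    mat1norm (A * (M - F) - 1) ≤ 2 * Real.sqrt pd * ε ∧
      IsUnit (M - F) ∧
      mat1norm ((M - F) - A⁻¹) / mat1norm A⁻¹ ≤ 2 * Real.sqrt pd * ε :=
  stmt13_general A M F hA hAinv ε pd hm hf hnnz hsmall
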